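/- arXiv:2104.11981 — 5 statements merged into one kernel-verified Lean document; each statement's English description precedes it below -/
import Mathlib

section
/- Let each f_i be L-smooth and μ-strongly convex (0 < μ ≤ L), let x⋆ be the unique minimizer of f and b² = (1/n)∑_{i=1}^n ‖∇f_i(x⋆)‖². Let 0 < γ ≤ μ(1−λ₂)/(6L²). If X_L ∈ ℝ^{n×d} is a fixed point of the full-batch DecentLaM recursion, i.e. (I−W)X_L = −γ W ∇f(X_L), then ∑_{i=1}^n ‖row_i(X_L) − x⋆‖² ≤ 4n(1 + 2L/μ)² γ² b² / (1−ρ)²; in particular the bound is independent of the momentum parameter β. -/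
/-!
Summing the fixed-point equation over the nodes (`W` is doubly stochastic) shows that the
gradients at the rows of `X_L` sum to zero, as they do at `x⋆`. Column by column, the
mean-zero part `X_L - 𝟙 x̄ᵀ` satisfies `(I - W)(X_L - 𝟙 x̄ᵀ) = -γ W ∇f(X_L)`, so the spectral gap
gives `(1 - λ₂) ‖X_L - 𝟙 x̄ᵀ‖ ≤ γ ‖∇f(X_L)‖`. Strong convexity at `x̄` against `x⋆` bounds
`√n ‖x̄ - x⋆‖` by `(L / μ) ‖X_L - 𝟙 x̄ᵀ‖`, and smoothness bounds `‖∇f(X_L)‖` by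
`L ‖X_L - 𝟙 x⋆ᵀ‖ + √n b`. For `γ ≤ μ (1 - λ₂) / (6 L²)` these estimates close up to
`(1 - λ₂) ‖X_L - 𝟙 x⋆ᵀ‖ ≤ 2 (1 + 2L/μ) γ √n b`, and `1 - ρ ≤ 1 - λ₂`.
-/

set_option autoImplicit false

open Finset Matrix WithLp
open scoped RealInnerProductSpace

noncomputable section

/-- `𝟙 x` is the matrix `𝟙 xᵀ`, all of whose rows are `x`. -/
local notation "𝟙" x:max => toLp 2 (Function.const _ x)

lemma OrthonormalBasis.real_inner_eq_sum_repr_mul {ι E : Type*} [Fintype ι]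
    [NormedAddCommGroup E] [InnerProductSpace ℝ E] (b : OrthonormalBasis ι ℝ E) (v w : E) :
    ⟪v, w⟫ = ∑ i, b.repr v i * b.repr w i := by
  rw [← b.repr.inner_map_map, PiLp.inner_apply]
  simp [mul_comm]

lemma OrthonormalBasis.norm_sq_eq_sum_repr_sq {ι E : Type*} [Fintype ι]
    [NormedAddCommGroup E] [InnerProductSpace ℝ E] (b : OrthonormalBasis ι ℝ E) (v : E) :
    ‖v‖ ^ 2 = ∑ i, b.repr v i ^ 2 := by
  rw [← b.repr.norm_map, EuclideanSpace.real_norm_sq_eq]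

namespace Matrix.IsHermitian

variable {ι : Type*} [Fintype ι] [DecidableEq ι] {W : Matrix ι ι ℝ}

lemma repr_toEuclideanLin (hW : W.IsHermitian) (v : EuclideanSpace ℝ ι) (i : ι) :
    hW.eigenvectorBasis.repr (toEuclideanLin W v) i
      = hW.eigenvalues i * hW.eigenvectorBasis.repr v i := by
  have hT := isSymmetric_toEuclideanLin_iff.mpr hW
  have hb : toEuclideanLin W (hW.eigenvectorBasis i) = hW.eigenvalues i • hW.eigenvectorBasis i :=
    congrArg (toLp 2) (hW.mulVec_eigenvectorBasis i)
  rw [OrthonormalBasis.repr_apply_apply, OrthonormalBasis.repr_apply_apply, ← hT, hb,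
    real_inner_smul_left]

lemma norm_toEuclideanLin_le (hW : W.IsHermitian) (habs : ∀ i, |hW.eigenvalues i| ≤ 1)
    (v : EuclideanSpace ℝ ι) : ‖toEuclideanLin W v‖ ≤ ‖v‖ := by
  rw [← sq_le_sq₀ (norm_nonneg _) (norm_nonneg _), hW.eigenvectorBasis.norm_sq_eq_sum_repr_sq,
    hW.eigenvectorBasis.norm_sq_eq_sum_repr_sq]
  refine Finset.sum_le_sum fun i _ => ?_
  rw [hW.repr_toEuclideanLin, mul_pow]
  exact mul_le_of_le_one_left (sq_nonneg _) ((sq_le_one_iff_abs_le_one _).2 (habs i))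

/-- Such a `u` is a multiple of `eigenvectorBasis i₀`. -/
lemma repr_eq_zero_of_inner_eigenvector (hW : W.IsHermitian) {i₀ : ι} {c : ℝ}
    (hc : ∀ i ≠ i₀, hW.eigenvalues i ≠ c) {u : EuclideanSpace ℝ ι}
    (hu : toEuclideanLin W u = c • u) (hu0 : u ≠ 0) {v : EuclideanSpace ℝ ι} (hv : ⟪u, v⟫ = 0) :
    hW.eigenvectorBasis.repr v i₀ = 0 := by
  set b := hW.eigenvectorBasis
  have hcoord : ∀ i ≠ i₀, b.repr u i = 0 := fun i hi => by
    have h := hW.repr_toEuclideanLin u i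
    rw [hu, map_smul, PiLp.smul_apply, smul_eq_mul] at h
    have h' : (hW.eigenvalues i - c) * b.repr u i = 0 := by linear_combination -h
    exact (mul_eq_zero.1 h').resolve_left (sub_ne_zero.2 (hc i hi))
  have hu₀ : b.repr u i₀ ≠ 0 := fun h0 => hu0 <| b.repr.map_eq_zero_iff.1 <| by
    ext i
    by_cases hi : i = i₀
    · simp [hi, h0]
    · simp [hcoord i hi]
  rw [b.real_inner_eq_sum_repr_mul, Finset.sum_eq_single i₀ (fun i _ hi => by
    rw [hcoord i hi, zero_mul]) (by simp)] at hv
  exact (mul_eq_zero.1 hv).resolve_left hu₀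

lemma inner_toEuclideanLin_le (hW : W.IsHermitian) {i₀ : ι} {r : ℝ}
    (hle : ∀ i ≠ i₀, hW.eigenvalues i ≤ r) {v : EuclideanSpace ℝ ι}
    (hv : hW.eigenvectorBasis.repr v i₀ = 0) :
    ⟪v, toEuclideanLin W v⟫ ≤ r * ‖v‖ ^ 2 := by
  rw [hW.eigenvectorBasis.real_inner_eq_sum_repr_mul, hW.eigenvectorBasis.norm_sq_eq_sum_repr_sq,
    Finset.mul_sum]
  refine Finset.sum_le_sum fun i _ => ?_
  rw [hW.repr_toEuclideanLin]
  by_cases hi : i = i₀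
  · simp [hi, hv]
  · nlinarith [hle i hi, sq_nonneg (hW.eigenvectorBasis.repr v i)]

/-- A vector of mean zero is orthogonal to the eigenvector `𝟙` of eigenvalue `1`, so it only
sees the eigenvalues `≤ r`. -/
lemma mul_norm_le_norm_sub_toEuclideanLin (hW : W.IsHermitian) (hrow : ∀ i, ∑ j, W i j = 1)
    {i₀ : ι} {r : ℝ} (hr : r < 1) (hle : ∀ i ≠ i₀, hW.eigenvalues i ≤ r)
    {v : EuclideanSpace ℝ ι} (hv : ∑ i, v i = 0) :
    (1 - r) * ‖v‖ ≤ ‖v - toEuclideanLin W v‖ := by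
  set one : EuclideanSpace ℝ ι := toLp 2 fun _ => 1
  have hone : toEuclideanLin W one = (1 : ℝ) • one := by
    ext i
    simp [one, mulVec, dotProduct, hrow i]
  have hone0 : one ≠ 0 := fun h => by
    simpa [one] using congrArg (fun w : EuclideanSpace ℝ ι => w i₀) h
  have hperp : ⟪one, v⟫ = 0 := by simpa [one, PiLp.inner_apply] using hv
  have hv₀ := hW.repr_eq_zero_of_inner_eigenvector
    (fun i hi => ((hle i hi).trans_lt hr).ne) hone hone0 hperp
  have hquad := hW.inner_toEuclideanLin_le hle hv₀
  have hcs : (1 - r) * ‖v‖ ^ 2 ≤ ‖v‖ * ‖v - toEuclideanLin W v‖ := by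
    calc (1 - r) * ‖v‖ ^ 2 ≤ ⟪v, v - toEuclideanLin W v⟫ := by
          rw [inner_sub_right, real_inner_self_eq_norm_sq]; linarith
      _ ≤ ‖v‖ * ‖v - toEuclideanLin W v‖ := real_inner_le_norm _ _
  rcases (norm_nonneg v).eq_or_lt with h0 | hpos
  · rw [← h0, mul_zero]; exact norm_nonneg _
  · nlinarith

end Matrix.IsHermitian

/-- The product `W X` of matrices, `X` being given by its rows `X i ∈ E`. -/
def mix {ι E : Type*} [Fintype ι] [AddCommGroup E] [Module ℝ E] (W : Matrix ι ι ℝ)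
    (X : PiLp 2 fun _ : ι => E) : PiLp 2 fun _ : ι => E :=
  toLp 2 fun i => ∑ j, W i j • X j

/-- The matrix `∇f(X)` whose `i`-th row is `g i (X i)`. -/
def rowwise {ι E F : Type*} (g : ι → E → F) (X : PiLp 2 fun _ : ι => E) :
    PiLp 2 fun _ : ι => F :=
  toLp 2 fun i => g i (X i)

def column {ι κ : Type*} (X : PiLp 2 fun _ : ι => EuclideanSpace ℝ κ) (k : κ) :
    EuclideanSpace ℝ ι :=
  toLp 2 fun i => X i k

section RowFamilies

variable {ι E : Type*} [Fintype ι] [NormedAddCommGroup E]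

lemma norm_toLp_const_two (x : E) :
    ‖(𝟙 x : PiLp 2 fun _ : ι => E)‖ = √(Fintype.card ι) * ‖x‖ := by
  rw [← sq_eq_sq₀ (norm_nonneg _) (by positivity), PiLp.norm_sq_eq_of_L2, mul_pow,
    Real.sq_sqrt (Nat.cast_nonneg _)]
  simp

lemma norm_rowwise_sub_le {F : Type*} [NormedAddCommGroup F] {g : ι → E → F} {L : ℝ}
    (hL : 0 ≤ L) (hsmooth : ∀ i x y, ‖g i x - g i y‖ ≤ L * ‖x - y‖)
    (X Y : PiLp 2 fun _ : ι => E) : ‖rowwise g X - rowwise g Y‖ ≤ L * ‖X - Y‖ := by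
  rw [← sq_le_sq₀ (norm_nonneg _) (by positivity), mul_pow, PiLp.norm_sq_eq_of_L2,
    PiLp.norm_sq_eq_of_L2, Finset.mul_sum]
  refine Finset.sum_le_sum fun i _ => ?_
  rw [← mul_pow]
  exact pow_le_pow_left₀ (norm_nonneg _) (hsmooth i (X i) (Y i)) 2

variable [InnerProductSpace ℝ E]

lemma inner_toLp_const (X : PiLp 2 fun _ : ι => E) (x : E) : ⟪X, 𝟙 x⟫ = ⟪∑ i, X i, x⟫ := by
  simp [PiLp.inner_apply, sum_inner]

lemma sum_mix {W : Matrix ι ι ℝ} (hcol : ∀ j, ∑ i, W i j = 1) (X : PiLp 2 fun _ : ι => E) :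
    ∑ i, mix W X i = ∑ i, X i := by
  simp only [mix, Finset.sum_comm (γ := ι), ← Finset.sum_smul, hcol, one_smul]

lemma mix_sub_const {W : Matrix ι ι ℝ} (hrow : ∀ i, ∑ j, W i j = 1) (X : PiLp 2 fun _ : ι => E)
    (x : E) : mix W (X - 𝟙 x) = mix W X - 𝟙 x := by
  ext1 i
  simp [mix, smul_sub, Finset.sum_sub_distrib, ← Finset.sum_smul, hrow i]

lemma sum_eq_zero_of_sub_mix_eq {W : Matrix ι ι ℝ} (hcol : ∀ j, ∑ i, W i j = 1) {γ : ℝ}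
    (hγ : γ ≠ 0) {X G : PiLp 2 fun _ : ι => E} (h : X - mix W X = (-γ) • mix W G) :
    ∑ i, G i = 0 := by
  have hsum := congrArg (fun Y : PiLp 2 (fun _ : ι => E) => ∑ i, Y i) h
  simp only [PiLp.sub_apply, PiLp.smul_apply, Finset.sum_sub_distrib, ← Finset.smul_sum,
    sum_mix hcol, sub_self] at hsum
  exact (smul_eq_zero.1 hsum.symm).resolve_left (neg_ne_zero.2 hγ)

end RowFamilies

section Columns

variable {ι κ : Type*} [Fintype ι]

lemma norm_sq_eq_sum_norm_sq_column [Fintype κ] (X : PiLp 2 fun _ : ι => EuclideanSpace ℝ κ) :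
    ‖X‖ ^ 2 = ∑ k, ‖column X k‖ ^ 2 := by
  simp only [PiLp.norm_sq_eq_of_L2, column]
  exact Finset.sum_comm

lemma mul_norm_le_of_forall_column [Fintype κ] {a : ℝ} (ha : 0 ≤ a)
    {X Y : PiLp 2 fun _ : ι => EuclideanSpace ℝ κ} (h : ∀ k, a * ‖column X k‖ ≤ ‖column Y k‖) :
    a * ‖X‖ ≤ ‖Y‖ := by
  rw [← sq_le_sq₀ (by positivity) (norm_nonneg _), mul_pow, norm_sq_eq_sum_norm_sq_column,
    norm_sq_eq_sum_norm_sq_column, Finset.mul_sum]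
  refine Finset.sum_le_sum fun k _ => ?_
  rw [← mul_pow]
  exact pow_le_pow_left₀ (by positivity) (h k) 2

lemma column_mix [DecidableEq ι] (W : Matrix ι ι ℝ) (X : PiLp 2 fun _ : ι => EuclideanSpace ℝ κ)
    (k : κ) : column (mix W X) k = toEuclideanLin W (column X k) := by
  ext i
  simp [column, mix, mulVec, dotProduct, WithLp.ofLp_sum]

variable [Fintype κ] [DecidableEq ι] {W : Matrix ι ι ℝ}

lemma norm_mix_le (hW : W.IsHermitian) (habs : ∀ i, |hW.eigenvalues i| ≤ 1)
    (X : PiLp 2 fun _ : ι => EuclideanSpace ℝ κ) : ‖mix W X‖ ≤ ‖X‖ := by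
  simpa using mul_norm_le_of_forall_column zero_le_one (X := mix W X) (Y := X) fun k => by
    rw [one_mul, column_mix]; exact hW.norm_toEuclideanLin_le habs _

lemma mul_norm_le_norm_sub_mix (hW : W.IsHermitian) (hrow : ∀ i, ∑ j, W i j = 1)
    {i₀ : ι} {r : ℝ} (hr : r < 1) (hle : ∀ i ≠ i₀, hW.eigenvalues i ≤ r)
    {X : PiLp 2 fun _ : ι => EuclideanSpace ℝ κ} (hX : ∑ i, X i = 0) :
    (1 - r) * ‖X‖ ≤ ‖X - mix W X‖ :=
  mul_norm_le_of_forall_column (by linarith) fun k => by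
    have hcol : column (X - mix W X) k = column X k - toEuclideanLin W (column X k) := by
      rw [← column_mix]; rfl
    rw [hcol]
    refine hW.mul_norm_le_norm_sub_toEuclideanLin hrow hr hle ?_
    simpa [column, WithLp.ofLp_sum] using congrArg (fun x : EuclideanSpace ℝ κ => x k) hX

lemma mul_norm_sub_mean_le (hW : W.IsHermitian) (hrow : ∀ i, ∑ j, W i j = 1)
    (habs : ∀ i, |hW.eigenvalues i| ≤ 1) {i₀ : ι} {r : ℝ} (hr : r < 1)
    (hle : ∀ i ≠ i₀, hW.eigenvalues i ≤ r) {γ : ℝ} (hγ : 0 ≤ γ)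
    {X G : PiLp 2 fun _ : ι => EuclideanSpace ℝ κ} (hfix : X - mix W X = (-γ) • mix W G) :
    (1 - r) * ‖X - 𝟙 ((Fintype.card ι : ℝ)⁻¹ • ∑ i, X i)‖ ≤ γ * ‖G‖ := by
  set xbar := (Fintype.card ι : ℝ)⁻¹ • ∑ i, X i
  have : Nonempty ι := ⟨i₀⟩
  have hcard : (Fintype.card ι : ℝ) ≠ 0 := Nat.cast_ne_zero.2 Fintype.card_ne_zero
  have hmean : ∑ i, (X - 𝟙 xbar : PiLp 2 fun _ : ι => EuclideanSpace ℝ κ) i = 0 := by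
    simp [Finset.sum_sub_distrib, xbar, ← Nat.cast_smul_eq_nsmul ℝ, smul_smul, hcard]
  calc (1 - r) * ‖X - 𝟙 xbar‖ ≤ ‖X - 𝟙 xbar - mix W (X - 𝟙 xbar)‖ :=
        mul_norm_le_norm_sub_mix hW hrow hr hle hmean
    _ = γ * ‖mix W G‖ := by
        rw [mix_sub_const hrow, sub_sub_sub_cancel_right, hfix, norm_smul, norm_neg,
          Real.norm_of_nonneg hγ]
    _ ≤ γ * ‖G‖ := by gcongr; exact norm_mix_le hW habs G

end Columns

section Optimization

variable {ι E : Type*} [Fintype ι] [NormedAddCommGroup E] [InnerProductSpace ℝ E]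

lemma sum_eq_zero_of_isLocalMin [CompleteSpace E] {f : ι → E → ℝ} {g : ι → E} {x : E}
    (hgrad : ∀ i, HasGradientAt (f i) (g i) x) (hmin : IsLocalMin (fun y => ∑ i, f i y) x) :
    ∑ i, g i = 0 := by
  have hderiv :
      HasFDerivAt (fun y => ∑ i, f i y) (InnerProductSpace.toDual ℝ E (∑ i, g i)) x := by
    rw [map_sum]
    exact HasFDerivAt.fun_sum fun i _ => (hgrad i).hasFDerivAt
  exact (InnerProductSpace.toDual ℝ E).map_eq_zero_iff.1 (hmin.hasFDerivAt_eq_zero hderiv)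

variable {g : ι → E → E} {L μ : ℝ}

/-- Strong convexity between `y` and `x⋆`, with `∑ i, g i (X i) = ∑ i, g i x⋆` inserted into the
gradient sum at `y`. -/
lemma mul_sqrt_card_mul_norm_sub_le (hL : 0 ≤ L)
    (hsmooth : ∀ i x y, ‖g i x - g i y‖ ≤ L * ‖x - y‖)
    (hsc : ∀ i x y, μ * ‖x - y‖ ^ 2 ≤ ⟪g i x - g i y, x - y⟫)
    {X : PiLp 2 fun _ : ι => E} {xstar : E} (hsum : ∑ i, g i (X i) = ∑ i, g i xstar) (y : E) :
    μ * (√(Fintype.card ι) * ‖y - xstar‖) ≤ L * ‖X - 𝟙 y‖ := by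
  set s := √(Fintype.card ι)
  have hs : s ^ 2 = Fintype.card ι := Real.sq_sqrt (Nat.cast_nonneg _)
  have key : s * ‖y - xstar‖ * (μ * (s * ‖y - xstar‖))
      ≤ s * ‖y - xstar‖ * (L * ‖X - 𝟙 y‖) := by
    calc s * ‖y - xstar‖ * (μ * (s * ‖y - xstar‖)) = ∑ i : ι, μ * ‖y - xstar‖ ^ 2 := by
          rw [Finset.sum_const, Finset.card_univ, nsmul_eq_mul, ← hs]; ring
      _ ≤ ∑ i, ⟪g i y - g i xstar, y - xstar⟫ := Finset.sum_le_sum fun i _ => hsc i y xstar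
      _ = ⟪rowwise g (𝟙 y) - rowwise g X, 𝟙 (y - xstar)⟫ := by
          rw [inner_toLp_const, ← sum_inner]
          congr 1
          simp [rowwise, Finset.sum_sub_distrib, hsum]
      _ ≤ ‖rowwise g (𝟙 y) - rowwise g X‖ * ‖𝟙 (y - xstar)‖ := real_inner_le_norm _ _
      _ ≤ L * ‖𝟙 y - X‖ * (s * ‖y - xstar‖) := by
          rw [norm_toLp_const_two]
          gcongr
          exact norm_rowwise_sub_le hL hsmooth _ _
      _ = s * ‖y - xstar‖ * (L * ‖X - 𝟙 y‖) := by rw [norm_sub_rev]; ring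
  rcases (mul_nonneg (Real.sqrt_nonneg _) (norm_nonneg _) : 0 ≤ s * ‖y - xstar‖).eq_or_lt
    with h0 | hpos
  · rw [← h0, mul_zero]; positivity
  · exact le_of_mul_le_mul_left key hpos

/-- `hD` and `hP` give `μ D ≤ (μ + L) C`; then the step-size bound absorbs the `L D` term of `hGn`
and leaves `σ C ≤ 3 γ B / 2`. -/
lemma bias_bound_of_estimates {γ σ C D P B Gn : ℝ} (hμ : 0 < μ) (hμL : μ ≤ L) (hγ0 : 0 ≤ γ)
    (hγ : γ ≤ μ * σ / (6 * L ^ 2)) (hC : 0 ≤ C) (hcons : σ * C ≤ γ * Gn)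
    (hGn : Gn ≤ L * D + B) (hP : μ * P ≤ L * C) (hD : D ≤ C + P) :
    σ * D ≤ 2 * (1 + 2 * L / μ) * γ * B := by
  have hL : 0 < L := hμ.trans_le hμL
  have hstep : 6 * L ^ 2 * γ ≤ μ * σ := by
    rw [le_div_iff₀ (by positivity)] at hγ; linarith
  have hσ : 0 ≤ σ := nonneg_of_mul_nonneg_right (hstep.trans' (by positivity)) hμ
  have hμD : μ * D ≤ (μ + L) * C := by nlinarith
  have hLμ : 3 * (L * (μ + L)) ≤ 6 * L ^ 2 := by nlinarith
  have hσC : μ * (2 * (σ * C)) ≤ μ * (3 * (γ * B)) := by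
    nlinarith [mul_le_mul_of_nonneg_left hGn hγ0,
      mul_le_mul_of_nonneg_left hμD (mul_nonneg hγ0 hL.le),
      mul_le_mul_of_nonneg_right (mul_le_mul_of_nonneg_right hLμ hγ0) hC,
      mul_le_mul_of_nonneg_right hstep hC]
  have hσC' := le_of_mul_le_mul_left hσC hμ
  have hσD : μ * (σ * D) ≤ (μ + L) * (σ * C) := by nlinarith [mul_le_mul_of_nonneg_left hμD hσ]
  rw [show 2 * (1 + 2 * L / μ) * γ * B = 2 * (μ + 2 * L) * γ * B / μ by field_simp,
    le_div_iff₀ hμ]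
  nlinarith [mul_nonneg hσ hC]

lemma mul_norm_sub_const_le_of_consensus (hμ : 0 < μ) (hμL : μ ≤ L)
    (hsmooth : ∀ i x y, ‖g i x - g i y‖ ≤ L * ‖x - y‖)
    (hsc : ∀ i x y, μ * ‖x - y‖ ^ 2 ≤ ⟪g i x - g i y, x - y⟫) {γ σ : ℝ} (hγ0 : 0 ≤ γ)
    (hγ : γ ≤ μ * σ / (6 * L ^ 2)) {X : PiLp 2 fun _ : ι => E} {xstar : E}
    (hsum : ∑ i, g i (X i) = ∑ i, g i xstar) {y : E}
    (hcons : σ * ‖X - 𝟙 y‖ ≤ γ * ‖rowwise g X‖) :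
    σ * ‖X - 𝟙 xstar‖ ≤ 2 * (1 + 2 * L / μ) * γ * ‖rowwise g (𝟙 xstar)‖ := by
  have hL : 0 ≤ L := hμ.le.trans hμL
  refine bias_bound_of_estimates hμ hμL hγ0 hγ (norm_nonneg _) hcons ?_
    (mul_sqrt_card_mul_norm_sub_le hL hsmooth hsc hsum y) ?_
  · calc ‖rowwise g X‖ ≤ ‖rowwise g (𝟙 xstar)‖ + ‖rowwise g X - rowwise g (𝟙 xstar)‖ :=
          norm_le_norm_add_norm_sub' _ _
      _ ≤ L * ‖X - 𝟙 xstar‖ + ‖rowwise g (𝟙 xstar)‖ := by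
          linarith [norm_rowwise_sub_le hL hsmooth X (𝟙 xstar)]
  · calc ‖X - 𝟙 xstar‖ = ‖(X - 𝟙 y) + 𝟙 (y - xstar)‖ := by congr 1; ext1 i; simp
      _ ≤ ‖X - 𝟙 y‖ + √(Fintype.card ι) * ‖y - xstar‖ := by
          rw [← norm_toLp_const_two]; exact norm_add_le _ _

end Optimization

lemma le_apply_one_of_ne_apply_zero {ι : Type*} {n : ℕ} {ev : ι → ℝ} {lam : Fin n → ℝ}
    {e : Fin n ≃ ι} (hlam : ∀ i, lam i = ev (e i)) (hanti : Antitone lam) (hn : 1 < n) {i : ι}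
    (hi : i ≠ e ⟨0, Nat.zero_lt_of_lt hn⟩) : ev i ≤ lam ⟨1, hn⟩ := by
  rw [← e.apply_symm_apply i, ← hlam]
  exact hanti (Nat.one_le_iff_ne_zero.2 fun h => hi <| by
    rw [← e.apply_symm_apply i]; exact congrArg e (Fin.ext h))

lemma abs_le_one_of_antitone {ι : Type*} {n : ℕ} {ev : ι → ℝ} {lam : Fin n → ℝ}
    {e : Fin n ≃ ι} (hlam : ∀ i, lam i = ev (e i)) (hanti : Antitone lam) (h0 : 0 < n)
    (hlam0 : lam ⟨0, h0⟩ = 1) (hlow : ∀ i, -1 < lam i) (i : ι) : |ev i| ≤ 1 := by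
  rw [← e.apply_symm_apply i, ← hlam]
  exact abs_le.2 ⟨(hlow _).le, hlam0 ▸ hanti (Fin.le_def.2 (Nat.zero_le _))⟩

lemma sq_le_sq_div_sq_of_mul_le {t σ D K : ℝ} (ht : 0 < t) (htσ : t ≤ σ) (hD : 0 ≤ D)
    (h : σ * D ≤ K) : D ^ 2 ≤ K ^ 2 / t ^ 2 := by
  rw [le_div_iff₀ (by positivity), ← mul_pow]
  exact pow_le_pow_left₀ (by positivity) (by nlinarith) 2

/-- **Inconsistency bias of DecentLaM (Proposition 3).**
Each `fi i` is `L`-smooth and `μ`-strongly convex, `xstar` is the (unique) minimizer of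
`f = (1/n) ∑ fi i`, and `b² = (1/n) ∑ ‖∇fi i (xstar)‖²`.  `W` is a symmetric weight matrix
with nonnegative entries and row sums `1`, whose eigenvalues (with multiplicity) are
enumerated in decreasing order by `lam`, with `lam 0 = 1 > lam 1` and all eigenvalues `> -1`;
`ρ = max {|λ₂|, |λ_n|}`.  If `0 < γ ≤ μ(1-λ₂)/(6L²)` and `XL` is a fixed point of the
full-batch DecentLaM recursion, i.e. `(I-W)XL = -γ W ∇f(XL)` (rowwise), then
`∑ i ‖row_i(XL) - xstar‖² ≤ 4 n (1 + 2L/μ)² γ² b² / (1-ρ)²`; in particular the bound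
does not involve any momentum parameter `β`. -/
theorem decentlam_inconsistency_bias
    {n d : ℕ} (hn : 1 < n)
    (fi : Fin n → EuclideanSpace ℝ (Fin d) → ℝ)
    (g : Fin n → EuclideanSpace ℝ (Fin d) → EuclideanSpace ℝ (Fin d))
    (hgrad : ∀ i x, HasGradientAt (fi i) (g i x) x)
    (L μ : ℝ) (hμ : 0 < μ) (hμL : μ ≤ L)
    (hsmooth : ∀ i x y, ‖g i x - g i y‖ ≤ L * ‖x - y‖)
    (hsc : ∀ i x y, μ * ‖x - y‖ ^ 2 ≤ ⟪g i x - g i y, x - y⟫)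
    (xstar : EuclideanSpace ℝ (Fin d))
    (hxstar : ∀ x, (n : ℝ)⁻¹ * ∑ i, fi i xstar ≤ (n : ℝ)⁻¹ * ∑ i, fi i x)
    (W : Matrix (Fin n) (Fin n) ℝ)
    (hW : W.IsHermitian)
    (hW1 : ∀ i, ∑ j, W i j = 1)
    (lam : Fin n → ℝ) (e : Fin n ≃ Fin n)
    (hlam : ∀ i, lam i = hW.eigenvalues (e i))
    (hanti : Antitone lam)
    (hlam1 : lam ⟨0, by omega⟩ = 1)
    (hgap : lam ⟨1, hn⟩ < 1)
    (hlow : ∀ i, -1 < lam i)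
    (ρ : ℝ) (hρ : ρ = max |lam ⟨1, hn⟩| |lam ⟨n - 1, by omega⟩|)
    (γ : ℝ) (hγ0 : 0 < γ) (hγ : γ ≤ μ * (1 - lam ⟨1, hn⟩) / (6 * L ^ 2))
    (XL : Fin n → EuclideanSpace ℝ (Fin d))
    (hfix : ∀ i, (XL i - ∑ j, W i j • XL j) = (-γ) • ∑ j, W i j • g j (XL j)) :
    ∑ i, ‖XL i - xstar‖ ^ 2
      ≤ 4 * n * (1 + 2 * L / μ) ^ 2 * γ ^ 2 * ((n : ℝ)⁻¹ * ∑ i, ‖g i xstar‖ ^ 2)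
        / (1 - ρ) ^ 2 := by
  have habs := abs_le_one_of_antitone hlam hanti (by omega) hlam1 hlow
  have hle := fun i => le_apply_one_of_ne_apply_zero (i := i) hlam hanti hn
  have hcol : ∀ j, ∑ i, W i j = 1 := fun j => by
    simpa only [← hW.apply j, star_trivial] using hW1 j
  have hρ1 : ρ < 1 := hρ ▸ max_lt (abs_lt.2 ⟨hlow _, hgap⟩)
    (abs_lt.2 ⟨hlow _, (hanti (Fin.le_def.2 (by simp; omega))).trans_lt hgap⟩)
  have hρ2 : 1 - ρ ≤ 1 - lam ⟨1, hn⟩ := by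
    linarith [le_abs_self (lam ⟨1, hn⟩), hρ ▸ le_max_left |lam ⟨1, hn⟩| |lam ⟨n - 1, by omega⟩|]
  set X : PiLp 2 fun _ : Fin n => EuclideanSpace ℝ (Fin d) := toLp 2 XL
  have hfixX : X - mix W X = (-γ) • mix W (rowwise g X) := by ext1 i; exact hfix i
  have hsum : ∑ i, g i (X i) = ∑ i, g i xstar := by
    rw [sum_eq_zero_of_isLocalMin (hgrad · xstar)
      (.of_forall fun y => le_of_mul_le_mul_left (hxstar y) (by positivity))]
    exact sum_eq_zero_of_sub_mix_eq hcol hγ0.ne' hfixX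
  have hbias := mul_norm_sub_const_le_of_consensus hμ hμL hsmooth hsc hγ0.le hγ hsum
    (mul_norm_sub_mean_le hW hW1 habs hgap hle hγ0.le hfixX)
  have hD : ∑ i, ‖XL i - xstar‖ ^ 2 = ‖X - 𝟙 xstar‖ ^ 2 := by simp [PiLp.norm_sq_eq_of_L2, X]
  have hB : ∑ i, ‖g i xstar‖ ^ 2 = ‖rowwise g (𝟙 xstar)‖ ^ 2 := by
    simp [PiLp.norm_sq_eq_of_L2, rowwise]
  rw [hD, hB]
  convert sq_le_sq_div_sq_of_mul_le (sub_pos.2 hρ1) hρ2 (norm_nonneg _) hbias using 1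
  field_simp
  ring
end
end

section
/- Let W ∈ ℝ^{n×n}, γ ∈ ℝ, β ∈ ℝ, and let (G^{(k)})_{k≥0} and X^{(0)} be arbitrary matrices in ℝ^{n×d}. Define M^{(0)} = 0 and, for k ≥ 0, M^{(k+1)} = βM^{(k)} + G^{(k)} and X^{(k+1)} = W(X^{(k)} − γM^{(k+1)}) (the DmSGD recursion). Then for every k ≥ 1: X^{(k+1)} = W(X^{(k)} − γG^{(k)}) + β(X^{(k)} − W X^{(k−1)}). -/
open Finset

noncomputable section

/-- **Reformulation of DmSGD.**
Given `W ∈ ℝ^{n×n}`, scalars `γ, β`, arbitrary matrices `G^{(k)}, X^{(0)} ∈ ℝ^{n×d}`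
(represented rowwise as maps `Fin n → ℝ^d`), define `M^{(0)} = 0`,
`M^{(k+1)} = β M^{(k)} + G^{(k)}` and `X^{(k+1)} = W (X^{(k)} - γ M^{(k+1)})`.
Then for every `k ≥ 1`:
`X^{(k+1)} = W (X^{(k)} - γ G^{(k)}) + β (X^{(k)} - W X^{(k-1)})`. -/
theorem dmsgd_reformulation
    {n d : ℕ} (W : Matrix (Fin n) (Fin n) ℝ) (γ β : ℝ)
    (G X M : ℕ → Fin n → EuclideanSpace ℝ (Fin d))
    (hM0 : M 0 = 0)
    (hM : ∀ k i, M (k + 1) i = β • M k i + G k i)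
    (hX : ∀ k i, X (k + 1) i = ∑ j, W i j • (X k j - γ • M (k + 1) j)) :
    ∀ k, 1 ≤ k → ∀ i,
      X (k + 1) i
        = (∑ j, W i j • (X k j - γ • G k j)) + β • (X k i - ∑ j, W i j • X (k - 1) j) := by
  intro k hk i
  obtain ⟨m, rfl⟩ : ∃ m, k = m + 1 := ⟨k - 1, (Nat.succ_pred_eq_of_pos hk).symm⟩
  have key : ∀ j, X (m + 1) j - γ • M (m + 2) j
      = (X (m + 1) j - γ • G (m + 1) j) + β • ((X m j - γ • M (m + 1) j) - X m j) := by
    intro j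
    rw [hM]
    module
  have h2 : X (m + 1) i - ∑ j, W i j • X m j = ∑ j, W i j • ((X m j - γ • M (m + 1) j) - X m j) := by
    rw [hX, ← Finset.sum_sub_distrib]
    exact Finset.sum_congr rfl fun j _ => (smul_sub _ _ _).symm
  simp only [Nat.add_sub_cancel]
  rw [hX, h2, Finset.smul_sum, ← Finset.sum_add_distrib]
  refine Finset.sum_congr rfl fun j _ => ?_
  rw [key j, smul_add, smul_comm β]
end
end

section
/- Let W ∈ ℝ^{n×n}, γ ≠ 0, β ∈ ℝ, and let (G^{(k)})_{k≥0} and X^{(0)} be arbitrary matrices in ℝ^{n×d}. Define M^{(0)} = 0 and, for k ≥ 0, G̃^{(k)} = (1/γ)X^{(k)} − (1/γ)W(X^{(k)} − γG^{(k)}), M^{(k+1)} = βM^{(k)} + G̃^{(k)}, X^{(k+1)} = X^{(k)} − γM^{(k+1)} (the DecentLaM recursion). Then for every k ≥ 1: X^{(k+1)} = W(X^{(k)} − γG^{(k)}) + β(X^{(k)} − X^{(k−1)}). -/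
open Finset

noncomputable section

/-- **Reformulation of DecentLaM.**
Given `W ∈ ℝ^{n×n}`, `γ ≠ 0`, `β ∈ ℝ`, arbitrary matrices `G^{(k)}, X^{(0)} ∈ ℝ^{n×d}`
(represented rowwise), define `M^{(0)} = 0`,
`G̃^{(k)} = (1/γ) X^{(k)} - (1/γ) W (X^{(k)} - γ G^{(k)})`,
`M^{(k+1)} = β M^{(k)} + G̃^{(k)}` and `X^{(k+1)} = X^{(k)} - γ M^{(k+1)}`.
Then for every `k ≥ 1`:
`X^{(k+1)} = W (X^{(k)} - γ G^{(k)}) + β (X^{(k)} - X^{(k-1)})`. -/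
theorem decentlam_reformulation
    {n d : ℕ} (W : Matrix (Fin n) (Fin n) ℝ) (γ β : ℝ) (hγ : γ ≠ 0)
    (G X M : ℕ → Fin n → EuclideanSpace ℝ (Fin d))
    (hM0 : M 0 = 0)
    (hM : ∀ k i, M (k + 1) i
      = β • M k i + (γ⁻¹ • X k i - γ⁻¹ • ∑ j, W i j • (X k j - γ • G k j)))
    (hX : ∀ k i, X (k + 1) i = X k i - γ • M (k + 1) i) :
    ∀ k, 1 ≤ k → ∀ i,
      X (k + 1) i
        = (∑ j, W i j • (X k j - γ • G k j)) + β • (X k i - X (k - 1) i) := by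
  rintro k hk i
  obtain ⟨m, rfl⟩ : ∃ m, k = m + 1 := ⟨k - 1, (Nat.succ_pred_eq_of_pos hk).symm⟩
  have h1 : X (m + 1) i - X (m + 1 - 1) i = -(γ • M (m + 1) i) := by
    simp [hX m i]
  rw [h1, hX (m + 1) i, hM (m + 1) i]
  rw [smul_add, smul_sub]
  simp only [smul_smul, mul_inv_cancel₀ hγ, one_smul, smul_neg, mul_comm γ β]
  abel
end
end

section
/- Let W ∈ ℝ^{n×n} be symmetric positive definite with W𝟙 = 𝟙 and let W^{1/2} be its positive-definite square root; let γ > 0 and each f_i be differentiable. Define Φ : ℝ^{n×d} → ℝ by Φ(S) = ∑_{i=1}^n f_i(row_i(W^{1/2}S)) + (1/(2γ)) tr(Sᵀ(I−W)S). Then (i) Φ is differentiable with ∇Φ(S) = W^{1/2}∇f(W^{1/2}S) + (1/γ)(I−W)S, and (ii) if X^{(k+1)} = W(X^{(k)} − γ∇f(X^{(k)})) (the full-batch DSGD recursion) and S^{(k)} := W^{−1/2}X^{(k)}, then S^{(k+1)} = S^{(k)} − γ∇Φ(S^{(k)}) for every k; i.e., DSGD is standard gradient descent on Φ. -/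
/-!
Write `M_A = Matrix.mixRowsCLM A` for `S ↦ (∑ⱼ A i j • S j)ᵢ`, i.e. `A ⊗ I` on `n × d`
matrices with the Frobenius inner product; its adjoint is `M_{Aᵀ}`. Then
`Φ S = F (M_{W^{1/2}} S) + (1/(2γ)) ⟪S, M_{I-W} S⟫` with `F Y = ∑ᵢ fᵢ (Y i)` separable, so the
chain rule together with the symmetry of `W^{1/2}` and `I - W` gives (i). For (ii),
`W^{-1/2} W = W^{1/2}` turns the DSGD step into `S ↦ W S - γ W^{1/2} ∇f(W^{1/2} S)`, which is
`S - γ ∇Φ(S)`.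
-/

open Finset
open scoped RealInnerProductSpace

section Gradient

variable {E E' : Type*} [NormedAddCommGroup E] [InnerProductSpace ℝ E] [CompleteSpace E]
  [NormedAddCommGroup E'] [InnerProductSpace ℝ E'] [CompleteSpace E']
  {f h : E → ℝ} {f' h' x : E}

open ContinuousLinearMap

theorem HasGradientAt.add (hf : HasGradientAt f f' x) (hh : HasGradientAt h h' x) :
    HasGradientAt (fun y => f y + h y) (f' + h') x := by
  rw [hasGradientAt_iff_hasFDerivAt, map_add]
  exact (hasGradientAt_iff_hasFDerivAt.mp hf).add (hasGradientAt_iff_hasFDerivAt.mp hh)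

theorem HasGradientAt.const_mul (c : ℝ) (hf : HasGradientAt f f' x) :
    HasGradientAt (fun y => c * f y) (c • f') x := by
  rw [hasGradientAt_iff_hasFDerivAt, map_smulₛₗ, RCLike.conj_to_real]
  exact (hasGradientAt_iff_hasFDerivAt.mp hf).const_mul c

theorem HasGradientAt.comp_continuousLinearMap (A : E' →L[ℝ] E) {x : E'}
    (hf : HasGradientAt f f' (A x)) : HasGradientAt (f ∘ A) (adjoint A f') x := by
  rw [hasGradientAt_iff_hasFDerivAt]
  refine ((hasGradientAt_iff_hasFDerivAt.mp hf).comp x A.hasFDerivAt).congr_fderiv ?_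
  ext v
  simp [adjoint_inner_left]

theorem IsSelfAdjoint.hasGradientAt_inner_self_apply {T : E →L[ℝ] E} (hT : IsSelfAdjoint T)
    (x : E) : HasGradientAt (fun y => ⟪y, T y⟫) ((2 : ℝ) • T x) x := by
  rw [hasGradientAt_iff_hasFDerivAt]
  refine ((hasFDerivAt_id x).inner ℝ T.hasFDerivAt).congr_fderiv ?_
  ext v
  have hT_symm : ⟪x, T v⟫ = ⟪T x, v⟫ := (hT.isSymmetric x v).symm
  simp [fderivInnerCLM_apply, two_smul, hT_symm, real_inner_comm]

theorem PiLp.hasGradientAt_sum {ι : Type*} [Fintype ι] {F : ι → Type*}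
    [∀ i, NormedAddCommGroup (F i)] [∀ i, InnerProductSpace ℝ (F i)] [∀ i, CompleteSpace (F i)]
    {f : ∀ i, F i → ℝ} {g : ∀ i, F i} {x : PiLp 2 F}
    (hf : ∀ i, HasGradientAt (f i) (g i) (x i)) :
    HasGradientAt (fun y : PiLp 2 F => ∑ i, f i (y i)) (WithLp.toLp 2 g) x := by
  have hcomp (i : ι) : HasFDerivAt (f i ∘ PiLp.proj 2 F i)
      ((InnerProductSpace.toDual ℝ (F i) (g i)).comp (PiLp.proj 2 F i)) x :=
    (hasGradientAt_iff_hasFDerivAt.mp (hf i)).comp x (PiLp.proj 2 F i).hasFDerivAt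
  rw [hasGradientAt_iff_hasFDerivAt]
  refine (HasFDerivAt.fun_sum (u := univ) fun i _ => hcomp i).congr_fderiv ?_
  ext v
  simp [PiLp.inner_apply]

end Gradient

namespace Matrix

section Module

variable {l m n R V : Type*} [Fintype n] [CommSemiring R] [AddCommMonoid V] [Module R V]

def mixRows (A : Matrix m n R) : (n → V) →ₗ[R] (m → V) :=
  LinearMap.pi fun i => ∑ j, A i j • LinearMap.proj j

@[simp]
theorem mixRows_apply (A : Matrix m n R) (v : n → V) (i : m) :
    A.mixRows v i = ∑ j, A i j • v j := by
  simp [mixRows]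

theorem mixRows_mixRows [Fintype m] (A : Matrix l m R) (B : Matrix m n R) (v : n → V) :
    A.mixRows (B.mixRows v) = (A * B).mixRows v := by
  ext i
  simp only [mixRows_apply, smul_sum, mul_apply, sum_smul, smul_smul]
  exact sum_comm

@[simp]
theorem one_mixRows [DecidableEq n] (v : n → V) : (1 : Matrix n n R).mixRows v = v := by
  ext i
  simp [one_apply, ite_smul]

theorem mixRows_inv_mixRows {K : Type*} [CommRing K] [Module K V] [DecidableEq n]
    {A : Matrix n n K} (hA : IsUnit A.det) (v : n → V) : A.mixRows (A⁻¹.mixRows v) = v := by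
  rw [mixRows_mixRows, mul_nonsing_inv A hA, one_mixRows]

theorem inv_mixRows_mul_self_mixRows {K : Type*} [CommRing K] [Module K V] [DecidableEq n]
    {A : Matrix n n K} (hA : IsUnit A.det) (v : n → V) :
    A⁻¹.mixRows ((A * A).mixRows v) = A.mixRows v := by
  rw [mixRows_mixRows, ← Matrix.mul_assoc, nonsing_inv_mul A hA, Matrix.one_mul]

end Module

section InnerProduct

variable {m n F : Type*} [Fintype n] [NormedAddCommGroup F] [InnerProductSpace ℝ F]

def mixRowsCLM (A : Matrix m n ℝ) : PiLp 2 (fun _ : n => F) →L[ℝ] PiLp 2 (fun _ : m => F) :=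
  (PiLp.continuousLinearEquiv 2 ℝ _).symm.toContinuousLinearMap ∘L
    (ContinuousLinearMap.pi fun i => ∑ j, A i j • ContinuousLinearMap.proj j) ∘L
    (PiLp.continuousLinearEquiv 2 ℝ _).toContinuousLinearMap

@[simp]
theorem ofLp_mixRowsCLM (A : Matrix m n ℝ) (S : PiLp 2 (fun _ : n => F)) :
    (A.mixRowsCLM S).ofLp = A.mixRows S.ofLp := by
  ext i
  simp [mixRowsCLM]

theorem inner_mixRowsCLM_right [Fintype m] (A : Matrix m n ℝ) (S : PiLp 2 (fun _ : m => F))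
    (T : PiLp 2 (fun _ : n => F)) : ⟪S, A.mixRowsCLM T⟫ = ∑ i, ∑ j, A i j * ⟪S i, T j⟫ := by
  simp [PiLp.inner_apply, inner_sum, real_inner_smul_right]

theorem adjoint_mixRowsCLM [Fintype m] [CompleteSpace F] (A : Matrix m n ℝ) :
    ContinuousLinearMap.adjoint (A.mixRowsCLM (F := F)) = Aᵀ.mixRowsCLM := by
  refine ((ContinuousLinearMap.eq_adjoint_iff _ _).mpr fun S T => ?_).symm
  rw [real_inner_comm, inner_mixRowsCLM_right, inner_mixRowsCLM_right, sum_comm]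
  simp [real_inner_comm]

theorem IsSymm.isSelfAdjoint_mixRowsCLM [CompleteSpace F] {A : Matrix n n ℝ} (hA : A.IsSymm) :
    IsSelfAdjoint (A.mixRowsCLM (F := F)) := by
  rw [ContinuousLinearMap.isSelfAdjoint_iff', adjoint_mixRowsCLM, hA.eq]

end InnerProduct

end Matrix

open Matrix

theorem dsgd_is_gradient_descent_general
    {n d : ℕ}
    (fi : Fin n → EuclideanSpace ℝ (Fin d) → ℝ)
    (g : Fin n → EuclideanSpace ℝ (Fin d) → EuclideanSpace ℝ (Fin d))
    (hgrad : ∀ i x, HasGradientAt (fi i) (g i x) x)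
    (W : Matrix (Fin n) (Fin n) ℝ) (hWpd : W.PosDef)
    (Whalf : Matrix (Fin n) (Fin n) ℝ) (hWhalfpd : Whalf.PosDef)
    (hWhalfsq : Whalf * Whalf = W)
    (γ : ℝ) (hγ : 0 < γ)
    (Φ : PiLp 2 (fun _ : Fin n => EuclideanSpace ℝ (Fin d)) → ℝ)
    (hΦ : ∀ S, Φ S = (∑ i, fi i (∑ j, Whalf i j • S j))
        + (1 / (2 * γ)) * ∑ i, ∑ j, ((if i = j then (1 : ℝ) else 0) - W i j) * ⟪S i, S j⟫)
    (X : ℕ → Fin n → EuclideanSpace ℝ (Fin d))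
    (hX : ∀ k i, X (k + 1) i = ∑ j, W i j • (X k j - γ • g j (X k j)))
    (S : ℕ → PiLp 2 (fun _ : Fin n => EuclideanSpace ℝ (Fin d)))
    (hS : ∀ k i, S k i = ∑ j, Whalf⁻¹ i j • X k j) :
    (∀ Z : PiLp 2 (fun _ : Fin n => EuclideanSpace ℝ (Fin d)),
      HasGradientAt Φ
        (WithLp.toLp 2 (fun i => (∑ j, Whalf i j • g j (∑ l, Whalf j l • Z l))
          + γ⁻¹ • (Z i - ∑ j, W i j • Z j))) Z)
    ∧ (∀ k i, S (k + 1) i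
        = S k i - γ • ((∑ j, Whalf i j • g j (∑ l, Whalf j l • S k l))
          + γ⁻¹ • (S k i - ∑ j, W i j • S k j))) := by
  have hWhalf : Whalf.IsSymm := isHermitian_iff_isSymm.mp hWhalfpd.isHermitian
  have hW : (1 - W).IsSymm := isSymm_one.sub (isHermitian_iff_isSymm.mp hWpd.isHermitian)
  refine ⟨fun Z => ?_, fun k i => ?_⟩
  · have hΦ' : Φ = fun S => ∑ i, fi i (Whalf.mixRowsCLM S i)
        + (1 / (2 * γ)) * ⟪S, (1 - W).mixRowsCLM S⟫ := by
      ext S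
      simp [hΦ, inner_mixRowsCLM_right, one_apply]
    have hgradΦ := ((PiLp.hasGradientAt_sum fun i => hgrad i _).comp_continuousLinearMap
      Whalf.mixRowsCLM).add
        ((hW.isSelfAdjoint_mixRowsCLM.hasGradientAt_inner_self_apply Z).const_mul (1 / (2 * γ)))
    rw [hΦ']
    convert hgradΦ using 1
    · rfl
    have hc : 1 / (2 * γ) * 2 = γ⁻¹ := by field_simp
    rw [adjoint_mixRowsCLM, hWhalf.eq, smul_smul, hc]
    ext i
    simp [one_apply, sub_smul, ite_smul]
  · have hdet : IsUnit Whalf.det := (isUnit_iff_isUnit_det _).mp hWhalfpd.isUnit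
    have hSX (k : ℕ) : (S k).ofLp = Whalf⁻¹.mixRows (X k) := funext fun i => by simp [hS]
    have hXS : X k = Whalf.mixRows (S k).ofLp := by rw [hSX, mixRows_inv_mixRows hdet]
    have hstep : (S (k + 1)).ofLp = W.mixRows (S k).ofLp
        - γ • Whalf.mixRows (fun j => g j (Whalf.mixRows (S k).ofLp j)) := by
      have hXk : X (k + 1) = W.mixRows (X k - γ • fun j => g j (X k j)) :=
        funext fun i => by simp [hX]
      rw [hSX, hXk, ← hWhalfsq, inv_mixRows_mul_self_mixRows hdet, map_sub, map_smul, hXS,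
        mixRows_mixRows]
    have hstep_i := congrFun hstep i
    simp only [Pi.sub_apply, Pi.smul_apply, mixRows_apply] at hstep_i
    rw [hstep_i, smul_add, smul_smul, mul_inv_cancel₀ hγ.ne', one_smul]
    abel

/-- **DSGD is standard gradient descent on a penalized objective.**
Let `W ∈ ℝ^{n×n}` be symmetric positive definite with `W𝟙 = 𝟙`, with positive-definite
square root `Whalf` (`Whalf * Whalf = W`), and `γ > 0`.  With each `fi i` differentiable
with gradient `g i`, define `Φ(S) = ∑ i fi i (row_i (W^{1/2} S)) + (1/(2γ)) tr(Sᵀ(I-W)S)`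
on the Frobenius inner-product space of `n×d` matrices (`PiLp 2` of rows).  Then:
(i) `Φ` has gradient `∇Φ(S) = W^{1/2} ∇f(W^{1/2} S) + (1/γ)(I-W) S` at every `S`, and
(ii) if `X^{(k+1)} = W(X^{(k)} - γ∇f(X^{(k)}))` (full-batch DSGD) and
`S^{(k)} = W^{-1/2} X^{(k)}`, then `S^{(k+1)} = S^{(k)} - γ ∇Φ(S^{(k)})` for every `k`. -/
theorem dsgd_is_gradient_descent
    {n d : ℕ}
    (fi : Fin n → EuclideanSpace ℝ (Fin d) → ℝ)
    (g : Fin n → EuclideanSpace ℝ (Fin d) → EuclideanSpace ℝ (Fin d))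
    (hgrad : ∀ i x, HasGradientAt (fi i) (g i x) x)
    (W : Matrix (Fin n) (Fin n) ℝ) (hWpd : W.PosDef)
    (hW1 : ∀ i, ∑ j, W i j = 1)
    (Whalf : Matrix (Fin n) (Fin n) ℝ) (hWhalfpd : Whalf.PosDef)
    (hWhalfsq : Whalf * Whalf = W)
    (γ : ℝ) (hγ : 0 < γ)
    (Φ : PiLp 2 (fun _ : Fin n => EuclideanSpace ℝ (Fin d)) → ℝ)
    (hΦ : ∀ S, Φ S = (∑ i, fi i (∑ j, Whalf i j • S j))
        + (1 / (2 * γ)) * ∑ i, ∑ j, ((if i = j then (1 : ℝ) else 0) - W i j) * ⟪S i, S j⟫)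
    (X : ℕ → Fin n → EuclideanSpace ℝ (Fin d))
    (hX : ∀ k i, X (k + 1) i = ∑ j, W i j • (X k j - γ • g j (X k j)))
    (S : ℕ → PiLp 2 (fun _ : Fin n => EuclideanSpace ℝ (Fin d)))
    (hS : ∀ k i, S k i = ∑ j, Whalf⁻¹ i j • X k j) :
    (∀ Z : PiLp 2 (fun _ : Fin n => EuclideanSpace ℝ (Fin d)),
      HasGradientAt Φ
        (WithLp.toLp 2 (fun i => (∑ j, Whalf i j • g j (∑ l, Whalf j l • Z l))
          + γ⁻¹ • (Z i - ∑ j, W i j • Z j))) Z)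
    ∧ (∀ k i, S (k + 1) i
        = S k i - γ • ((∑ j, Whalf i j • g j (∑ l, Whalf j l • S k l))
          + γ⁻¹ • (S k i - ∑ j, W i j • S k j))) :=
  dsgd_is_gradient_descent_general fi g hgrad W hWpd Whalf hWhalfpd hWhalfsq γ hγ Φ hΦ X hX S hS
end

section
/- Let β ∈ [0,1), γ > 0, and let (g^{(k)})_{k≥0} be any sequence in ℝ^d. Define m̄^{(0)} = 0, m̄^{(k+1)} = βm̄^{(k)} + (1−β)g^{(k)}, and s̄^{(k+1)} = s̄^{(k)} − (γ/(1−β))m̄^{(k+1)} from any s̄^{(0)} ∈ ℝ^d; define t̄^{(0)} = s̄^{(0)} and t̄^{(k)} = (1/(1−β))s̄^{(k)} − (β/(1−β))s̄^{(k−1)} for k ≥ 1. Then for all k ≥ 0: (i) t̄^{(k+1)} = t̄^{(k)} − (γ/(1−β))g^{(k)}, and (ii) t̄^{(k)} − s̄^{(k)} = −(γβ/(1−β)²)m̄^{(k)}. -/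
open Finset

noncomputable section

/-- **Auxiliary-sequence lemma for momentum SGD (Lemma 2).**
Let `β ∈ [0,1)`, `γ > 0`, and let `(g^{(k)})` be any sequence in `ℝ^d`.  Define
`m̄^{(0)} = 0`, `m̄^{(k+1)} = β m̄^{(k)} + (1-β) g^{(k)}`,
`s̄^{(k+1)} = s̄^{(k)} - (γ/(1-β)) m̄^{(k+1)}` from any `s̄^{(0)}`, and
`t̄^{(0)} = s̄^{(0)}`, `t̄^{(k)} = (1/(1-β)) s̄^{(k)} - (β/(1-β)) s̄^{(k-1)}` for `k ≥ 1`.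
Then for all `k ≥ 0`:
(i) `t̄^{(k+1)} = t̄^{(k)} - (γ/(1-β)) g^{(k)}`, and
(ii) `t̄^{(k)} - s̄^{(k)} = -(γβ/(1-β)²) m̄^{(k)}`. -/
theorem momentum_auxiliary_sequence
    {d : ℕ} (β γ : ℝ) (hβ0 : 0 ≤ β) (hβ1 : β < 1) (hγ : 0 < γ)
    (gs m s t : ℕ → EuclideanSpace ℝ (Fin d))
    (hm0 : m 0 = 0)
    (hm : ∀ k, m (k + 1) = β • m k + (1 - β) • gs k)
    (hs : ∀ k, s (k + 1) = s k - (γ / (1 - β)) • m (k + 1))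
    (ht0 : t 0 = s 0)
    (ht : ∀ k, 1 ≤ k → t k = (1 / (1 - β)) • s k - (β / (1 - β)) • s (k - 1)) :
    ∀ k, t (k + 1) = t k - (γ / (1 - β)) • gs k
      ∧ t k - s k = (-(γ * β / (1 - β) ^ 2)) • m k := by
  have hne : (1 : ℝ) - β ≠ 0 := by linarith
  intro k
  constructor
  · -- part (i)
    cases k with
    | zero =>
        rw [ht 1 le_rfl]
        simp only [Nat.sub_self]
        rw [hs 0, hm 0, hm0, ht0]
        match_scalars <;> field_simp <;> ring
    | succ k =>
        rw [ht (k + 1 + 1) (by omega), ht (k + 1) (by omega)]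
        simp only [Nat.add_sub_cancel]
        rw [hs (k + 1), hm (k + 1), hs k]
        match_scalars <;> field_simp <;> ring
  · -- part (ii)
    cases k with
    | zero =>
        rw [ht0, hm0]
        simp
    | succ k =>
        rw [ht (k + 1) (by omega)]
        simp only [Nat.add_sub_cancel]
        rw [hs k]
        match_scalars <;> field_simp <;> ring
end
end
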